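/- For every semantic information source 𝒳 = {X_n} at precision level δ(·), there exists a semantic source coding system that correctly codes at precision level δ(·) with code length ℓ(n) satisfying: for every ε > 0 there is n₀ such that for all n > n₀, SA(X_n, δ(n)) ≤ ℓ(n) < SA(X_n, δ(n)) + ε. -/

import Mathlib

def IsPmf {α : Type} [Fintype α] (p : α → ℝ) : Prop :=
  (∀ x, 0 ≤ p x) ∧ ∑ x, p x = 1

noncomputable def SD {α : Type} [Fintype α] (p q : α → ℝ) : ℝ :=
  (∑ x, |p x - q x|) / 2

/-- Boolean circuits over the basis {AND, OR, NOT}. -/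
inductive Circ (ι : Type) : Type
  | input : ι → Circ ι
  | and : Circ ι → Circ ι → Circ ι
  | or : Circ ι → Circ ι → Circ ι
  | not : Circ ι → Circ ι

def Circ.eval {ι : Type} : Circ ι → (ι → Bool) → Bool
  | .input i, v => v i
  | .and a b, v => a.eval v && b.eval v
  | .or a b, v => a.eval v || b.eval v
  | .not a, v => !(a.eval v)

def Circ.size {ι : Type} : Circ ι → ℕ
  | .input _ => 1
  | .and a b => a.size + b.size + 1
  | .or a b => a.size + b.size + 1
  | .not a => a.size + 1

/-- The logic-and-universe part `(C̄, u)` of an oc-circuit for a family of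
distributions: a step circuit with universe input `u`, an `Ns`-bit state,
an `Nm`-bit per-step semantics (or received-data) input, `Nr` fresh random
bits per step and `Ly` output bits per step. -/
structure OCLogic : Type where
  Nu : ℕ
  Ns : ℕ
  Nm : ℕ
  Nr : ℕ
  Ly : ℕ
  circ : Fin Ns ⊕ Fin Ly → Circ (Fin Nu ⊕ Fin Ns ⊕ Fin Nm ⊕ Fin Nr)
  u : Fin Nu → Bool
  s1 : Fin Ns → Bool

def OCLogic.step (c : OCLogic) (s : Fin c.Ns → Bool) (m : Fin c.Nm → Bool)
    (r : Fin c.Nr → Bool) : (Fin c.Ns → Bool) × (Fin c.Ly → Bool) :=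
  let env : Fin c.Nu ⊕ Fin c.Ns ⊕ Fin c.Nm ⊕ Fin c.Nr → Bool :=
    Sum.elim c.u (Sum.elim s (Sum.elim m r))
  (fun i => (c.circ (Sum.inl i)).eval env, fun j => (c.circ (Sum.inr j)).eval env)

def OCLogic.run (c : OCLogic) : List (Fin c.Nm → Bool) →
    List (Fin c.Nr → Bool) → (Fin c.Ns → Bool) → List (Fin c.Ly → Bool)
  | [], _, _ => []
  | _ :: _, [], _ => []
  | m :: ms', r :: rs, s =>
    (c.step s m r).2 :: OCLogic.run c ms' rs (c.step s m r).1

/-- Number of steps producing `n` output bits: `⌈n / Ly⌉`. -/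
def OCLogic.K (c : OCLogic) (n : ℕ) : ℕ := (n + c.Ly - 1) / c.Ly

/-- `n`-bit output of the iterated circuit on the semantics stream `sem`
and random blocks `rs`. -/
def OCLogic.outFun (c : OCLogic) (sem : ℕ → Fin c.Nm → Bool) (n : ℕ)
    (rs : List (Fin c.Nr → Bool)) : Fin n → Bool :=
  fun t =>
    let ys := c.run (List.ofFn fun i : Fin (c.K n) => sem (i : ℕ)) rs c.s1
    let y := ys.getD ((t : ℕ) / c.Ly) (fun _ => false)
    if h : (t : ℕ) % c.Ly < c.Ly then y ⟨(t : ℕ) % c.Ly, h⟩ else false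

/-- Output distribution on `{0,1}^n` of the oc-circuit `(C̄, u, n, sem)`. -/
noncomputable def OCLogic.outDist (c : OCLogic) (sem : ℕ → Fin c.Nm → Bool)
    (n : ℕ) : (Fin n → Bool) → ℝ :=
  fun x =>
    ((Finset.univ.filter (fun rs : Fin (c.K n) → Fin c.Nr → Bool =>
        c.outFun sem n (List.ofFn rs) = x)).card : ℝ) / 2 ^ (c.K n * c.Nr)

/-- Description length `|(C̄, u, m⃗_n)|` of the logic, universe, and the
semantics prefix used for an `n`-bit output. -/
def OCLogic.len (c : OCLogic) (n : ℕ) : ℕ :=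
  (∑ j : Fin c.Ns ⊕ Fin c.Ly, (c.circ j).size) + c.Nu + c.Ns +
    c.K n * c.Nm + 8

/-- A semantic information source at precision level `δ(·)`: a family of
distributions `X = {X_n}` admitting a proper oc-circuit — a single logic,
universe and infinite semantics stream whose `n`-bit output is `δ(n)`-close
to `X_n` for every `n`, and which for all sufficiently large `n` is shortest
among all (logic, universe, semantics-prefix) triples simulating `X_n`. -/
structure SemSource (δ : ℕ → ℝ) (X : (n : ℕ) → (Fin n → Bool) → ℝ) : Type where
  L : OCLogic
  sem : ℕ → Fin L.Nm → Bool
  close : ∀ n, SD (L.outDist sem n) (X n) ≤ δ n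
  n0 : ℕ
  minimal : ∀ n, n0 ≤ n → ∀ (L' : OCLogic) (sem' : ℕ → Fin L'.Nm → Bool),
    SD (L'.outDist sem' n) (X n) ≤ δ n → L.len n ≤ L'.len n

/-- Semantic information amount `SA(X_n, δ(n)) = ⌈n · N_m / L_y⌉` of the
proper logic of the source. -/
def SemSource.SA {δ : ℕ → ℝ} {X : (n : ℕ) → (Fin n → Bool) → ℝ}
    (S : SemSource δ X) (n : ℕ) : ℕ :=
  (n * S.L.Nm + S.L.Ly - 1) / S.L.Ly

/-- The receiver of a semantic source coding system is a conditional
oc-circuit without semantics input: its `Nm`-slot is fed by consecutive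
blocks of the transmitted message. -/
def msgBlocks (R : OCLogic) (msg : ℕ → Bool) : ℕ → Fin R.Nm → Bool :=
  fun i j => msg (i * R.Nm + (j : ℕ))

/-- Extend a finite transmitted string to an infinite one (padding by 0). -/
def extendMsg {ℓ : ℕ} (z : Fin ℓ → Bool) : ℕ → Bool :=
  fun t => if h : t < ℓ then z ⟨t, h⟩ else false

/-- A semantic source coding system `(ℓ, Snd, R)` correctly codes `X` at
precision level `δ(·)` if, for all sufficiently large `n`, the receiver's
output on the transmitted `ℓ(n)`-bit data is `δ(n)`-close to `X_n`. -/
def CorrectlyCodes (δ : ℕ → ℝ) (X : (n : ℕ) → (Fin n → Bool) → ℝ)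
    (ℓ : ℕ → ℕ) (Snd : (n : ℕ) → Fin (ℓ n) → Bool) (R : OCLogic) : Prop :=
  ∃ n0 : ℕ, ∀ n, n0 ≤ n →
    SD (R.outDist (msgBlocks R (extendMsg (Snd n))) n) (X n) ≤ δ n

/-!
The sender transmits the semantics stream of the proper oc-circuit itself, so `ℓ(n) = SA(X_n, δ(n))`
and the length bounds are trivial. The only subtlety is that the `K = ⌈n / L_y⌉` steps of the
circuit consume `K · N_m` semantics bits, which can exceed `⌈n · N_m / L_y⌉`. The receiver
therefore hard-wires the first semantics block into its initial state and runs one step behind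
the message, buffering each received block in its state until the next step; it then needs only
`(K - 1) · N_m ≤ ⌈n · N_m / L_y⌉` transmitted bits.
-/

def Circ.map {ι ι' : Type} (f : ι → ι') : Circ ι → Circ ι'
  | .input i => .input (f i)
  | .and a b => .and (a.map f) (b.map f)
  | .or a b => .or (a.map f) (b.map f)
  | .not a => .not (a.map f)

theorem Circ.eval_map {ι ι' : Type} (f : ι → ι') (c : Circ ι) (v : ι' → Bool) :
    (c.map f).eval v = c.eval (v ∘ f) := by
  induction c <;> simp only [Circ.map, Circ.eval, Function.comp_apply, *]

namespace OCLogic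

variable (L : OCLogic)

/-- `L.delayed` reads `L`'s semantics input from the buffer part of its state. -/
def delayedInput :
    Fin L.Nu ⊕ Fin L.Ns ⊕ Fin L.Nm ⊕ Fin L.Nr → Fin L.Nu ⊕ Fin (L.Ns + L.Nm) ⊕ Fin L.Nm ⊕ Fin L.Nr :=
  Sum.map id <| Sum.elim (fun s => .inl (Fin.castAdd L.Nm s)) <|
    Sum.elim (fun b => .inl (Fin.natAdd L.Ns b)) (fun r => .inr (.inr r))

/-- Simulates `L` one step behind its semantics input: the state is extended by an `Nm`-bit
buffer, initially `b0`, which `L` reads as its semantics block and which is then overwritten by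
the incoming block. -/
abbrev delayed (b0 : Fin L.Nm → Bool) : OCLogic where
  Nu := L.Nu
  Ns := L.Ns + L.Nm
  Nm := L.Nm
  Nr := L.Nr
  Ly := L.Ly
  circ := Sum.elim
    (Fin.append (fun i => (L.circ (.inl i)).map L.delayedInput)
      (fun j => .input (.inr (.inr (.inl j)))))
    (fun j => (L.circ (.inr j)).map L.delayedInput)
  u := L.u
  s1 := Fin.append L.s1 b0

variable {L}

theorem delayed_step (b0 : Fin L.Nm → Bool) (s : Fin L.Ns → Bool) (b m : Fin L.Nm → Bool)
    (r : Fin L.Nr → Bool) :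
    (L.delayed b0).step (Fin.append s b) m r =
      (Fin.append (L.step s b r).1 m, (L.step s b r).2) := by
  have henv : Sum.elim L.u (Sum.elim (Fin.append s b) (Sum.elim m r)) ∘ L.delayedInput =
      Sum.elim L.u (Sum.elim s (Sum.elim b r)) := by
    funext x
    rcases x with u | s | b | r <;> simp [delayedInput]
  refine Prod.ext (funext fun i => ?_) (funext fun j => ?_)
  · induction i using Fin.addCases with
    | left i =>
      simp only [step, delayed, Sum.elim_inl, Fin.append_left, Circ.eval_map, henv]
    | right j =>
      simp only [step, delayed, Sum.elim_inl, Fin.append_right, Circ.eval, Sum.elim_inr]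
  · simp only [step, delayed, Sum.elim_inr, Circ.eval_map, henv]

theorem run_delayed_ofFn (b0 : Fin L.Nm → Bool) (k : ℕ) :
    ∀ (sem : ℕ → Fin L.Nm → Bool) (rs : List (Fin L.Nr → Bool)) (s : Fin L.Ns → Bool),
      (L.delayed b0).run (List.ofFn fun i : Fin k => sem (i + 1)) rs (Fin.append s (sem 0))
        = L.run (List.ofFn fun i : Fin k => sem i) rs s := by
  induction k with
  | zero => intro sem rs s; cases rs <;> rfl
  | succ k ih =>
    intro sem rs s
    cases rs with
    | nil => simp only [List.ofFn_succ, run]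
    | cons r rs =>
      simp only [List.ofFn_succ, run, delayed_step, Fin.val_zero, Fin.val_succ]
      exact congrArg _ (ih (fun i => sem (i + 1)) rs _)

theorem outFun_delayed (b0 : Fin L.Nm → Bool) (sem : ℕ → Fin L.Nm → Bool) :
    (L.delayed b0).outFun sem = L.outFun (fun | 0 => b0 | i + 1 => sem i) := by
  funext n rs
  have h := run_delayed_ofFn b0 (L.K n) (fun | 0 => b0 | i + 1 => sem i) rs L.s1
  unfold outFun
  beta_reduce
  rw [← h]
  rfl

theorem outDist_delayed (b0 : Fin L.Nm → Bool) (sem : ℕ → Fin L.Nm → Bool) :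
    (L.delayed b0).outDist sem = L.outDist (fun | 0 => b0 | i + 1 => sem i) := by
  unfold outDist
  rw [outFun_delayed]
  rfl

theorem outDist_congr {sem sem' : ℕ → Fin L.Nm → Bool} {n : ℕ}
    (h : ∀ i < L.K n, sem i = sem' i) : L.outDist sem n = L.outDist sem' n := by
  have hsem : (List.ofFn fun i : Fin (L.K n) => sem i) = List.ofFn fun i => sem' i :=
    congrArg _ (funext fun i => h i i.isLt)
  unfold outDist outFun
  rw [hsem]

theorem pred_K_mul_le (n : ℕ) : (L.K n - 1) * L.Nm ≤ (n * L.Nm + L.Ly - 1) / L.Ly := by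
  rcases Nat.eq_zero_or_pos L.Ly with hLy | hLy
  · simp [K, hLy]
  rw [Nat.le_div_iff_mul_le hLy]
  have hK : L.K n * L.Ly ≤ n + L.Ly - 1 := Nat.div_mul_le_self _ _
  have hK' : (L.K n - 1) * L.Ly ≤ n := by rw [Nat.sub_mul]; omega
  calc (L.K n - 1) * L.Nm * L.Ly = (L.K n - 1) * L.Ly * L.Nm := by ring
    _ ≤ n * L.Nm := Nat.mul_le_mul_right _ hK'
    _ ≤ n * L.Nm + L.Ly - 1 := by omega

end OCLogic

def concatBlocks {N : ℕ} (b : ℕ → Fin N → Bool) (t : ℕ) : Bool :=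
  if h : 0 < N then b (t / N) ⟨t % N, Nat.mod_lt _ h⟩ else false

theorem concatBlocks_mul_add {N : ℕ} (b : ℕ → Fin N → Bool) (i : ℕ) (j : Fin N) :
    concatBlocks b (i * N + j) = b i j := by
  have hN : 0 < N := j.pos
  have hdiv : (i * N + j) / N = i := by
    rw [add_comm, Nat.add_mul_div_right _ _ hN, Nat.div_eq_of_lt j.isLt, zero_add]
  have hmod : (i * N + j) % N = j := by
    rw [add_comm, Nat.add_mul_mod_self_right, Nat.mod_eq_of_lt j.isLt]
  simp only [concatBlocks, dif_pos hN, hdiv, hmod]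

theorem msgBlocks_extendMsg_of_lt (R : OCLogic) {ℓ : ℕ} (z : Fin ℓ → Bool) {i : ℕ}
    {j : Fin R.Nm} (h : i * R.Nm + j < ℓ) :
    msgBlocks R (extendMsg z) i j = z ⟨i * R.Nm + j, h⟩ := by
  simp only [msgBlocks, extendMsg, dif_pos h]

theorem semantic_source_coding_general (δ : ℕ → ℝ) (X : (n : ℕ) → (Fin n → Bool) → ℝ)
    (S : SemSource δ X) :
    ∃ (ℓ : ℕ → ℕ) (Snd : (n : ℕ) → Fin (ℓ n) → Bool) (R : OCLogic),
      CorrectlyCodes δ X ℓ Snd R ∧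
      ∀ ε : ℝ, 0 < ε → ∃ n0 : ℕ, ∀ n, n0 < n →
        (S.SA n : ℝ) ≤ (ℓ n : ℝ) ∧ (ℓ n : ℝ) < (S.SA n : ℝ) + ε := by
  let Snd : (n : ℕ) → Fin (S.SA n) → Bool := fun _ p => concatBlocks (fun i => S.sem (i + 1)) p
  refine ⟨S.SA, Snd, S.L.delayed (S.sem 0), ⟨0, fun n _ => ?_⟩,
    fun ε hε => ⟨0, fun n _ => ⟨le_rfl, by linarith⟩⟩⟩
  rw [OCLogic.outDist_delayed, OCLogic.outDist_congr (sem' := S.sem)]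
  · exact S.close n
  rintro (_ | i) hi
  · rfl
  funext j
  have hbit : i * S.L.Nm + j < S.SA n := calc
    i * S.L.Nm + j < (i + 1) * S.L.Nm := by rw [Nat.succ_mul]; exact Nat.add_lt_add_left j.isLt _
    _ ≤ (S.L.K n - 1) * S.L.Nm := Nat.mul_le_mul_right _ (by omega)
    _ ≤ S.SA n := S.L.pred_K_mul_le n
  exact (msgBlocks_extendMsg_of_lt _ _ hbit).trans (concatBlocks_mul_add _ i j)

/-- semantic source coding theorem (achievability). For every
semantic information source there is a coding system that correctly codes
at precision level `δ(·)` with code length `ℓ(n)` satisfying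
`SA(X_n, δ(n)) ≤ ℓ(n) < SA(X_n, δ(n)) + ε` for all sufficiently large `n`. -/
theorem semantic_source_coding (δ : ℕ → ℝ) (X : (n : ℕ) → (Fin n → Bool) → ℝ)
    (hX : ∀ n, IsPmf (X n)) (S : SemSource δ X) :
    ∃ (ℓ : ℕ → ℕ) (Snd : (n : ℕ) → Fin (ℓ n) → Bool) (R : OCLogic),
      CorrectlyCodes δ X ℓ Snd R ∧
      ∀ ε : ℝ, 0 < ε → ∃ n0 : ℕ, ∀ n, n0 < n →
        (S.SA n : ℝ) ≤ (ℓ n : ℝ) ∧ (ℓ n : ℝ) < (S.SA n : ℝ) + ε :=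
  semantic_source_coding_general δ X S
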